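/- Let R' = k[m²,m³,n²,n³] ⊆ k[m,n]. If d ∈ R' is a divisor (in k[m,n]) of (m−n)·m^N for some N ≥ 0, then d = c·m^j for some unit c ∈ k and some integer j ≥ 0; that is, (m−n)·m^j does not lie in R' for any j. -/

import Mathlib

/-!
A sum or product of polynomials none of whose monomials has `n`-degree exactly one again has this
property, and the generators `m², m³, n², n³` have it; so all of `R'` has it, while `(m - n) m^j`
contains the monomial `-n m^j`. For the divisors: `m - n` and `m` are primes of the factorial ring
`k[m,n]`, so a divisor of `(m - n) m^N` is a unit times `(m - n)^a m^i` with `a ≤ 1`. Units are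
nonzero constants, and `a = 1` would put `(m - n) m^i` in `R'`.
-/

open MvPolynomial

/-- The subring `R' = k[m², m³, n², n³]` of `k[m,n]`, with `m = X 0`, `n = X 1`. -/
noncomputable def Rc2 (k : Type*) [Field k] : Subalgebra k (MvPolynomial (Fin 2) k) :=
  Algebra.adjoin k {(X 0 : MvPolynomial (Fin 2) k) ^ 2, (X 0 : MvPolynomial (Fin 2) k) ^ 3,
    (X 1 : MvPolynomial (Fin 2) k) ^ 2, (X 1 : MvPolynomial (Fin 2) k) ^ 3}

theorem associated_of_dvd_prime_mul_prime_pow {α : Type*} [CommMonoidWithZero α]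
    [IsCancelMulZero α] [DecompositionMonoid α] {p q d : α} (hp : Prime p) (hq : Prime q) {N : ℕ}
    (h : d ∣ p * q ^ N) : ∃ a ≤ 1, ∃ i ≤ N, Associated (p ^ a * q ^ i) d := by
  obtain ⟨d₁, d₂, h₁, h₂, rfl⟩ := exists_dvd_and_dvd_of_dvd_mul h
  obtain ⟨a, ha, hd₁⟩ := (dvd_prime_pow hp 1 (q := d₁)).1 (by rwa [pow_one])
  obtain ⟨i, hi, hd₂⟩ := (dvd_prime_pow hq N).1 h₂
  exact ⟨a, ha, i, hi, (hd₁.mul_mul hd₂).symm⟩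

namespace MvPolynomial

section WithoutDegreeOne

variable {R σ : Type*} [CommSemiring R]

def withoutDegreeOneIn (i : σ) : Subalgebra R (MvPolynomial σ R) where
  carrier := {p | ∀ e : σ →₀ ℕ, e i = 1 → coeff e p = 0}
  add_mem' {p q} hp hq e he := by rw [coeff_add, hp e he, hq e he, add_zero]
  mul_mem' {p q} hp hq e he := by
    classical
    rw [coeff_mul]
    refine Finset.sum_eq_zero fun x hx => ?_
    have hsum : x.1 i + x.2 i = 1 := by
      rw [← Finsupp.add_apply, Finset.HasAntidiagonal.mem_antidiagonal.1 hx, he]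
    rcases Nat.add_eq_one_iff.1 hsum with ⟨-, h⟩ | ⟨h, -⟩
    · rw [hq x.2 h, mul_zero]
    · rw [hp x.1 h, zero_mul]
  algebraMap_mem' r e he := by
    classical
    rw [algebraMap_eq, coeff_C, if_neg]
    rintro rfl
    exact zero_ne_one he

theorem monomial_mem_withoutDegreeOneIn {i : σ} {e : σ →₀ ℕ} (he : e i ≠ 1) (r : R) :
    monomial e r ∈ withoutDegreeOneIn i := fun e' he' => by
  classical
  rw [coeff_monomial, if_neg]
  rintro rfl
  exact he he'

theorem monomial_notMem_withoutDegreeOneIn {i : σ} {e : σ →₀ ℕ} (he : e i = 1) {r : R}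
    (hr : r ≠ 0) : monomial e r ∉ withoutDegreeOneIn i := fun h => by
  classical
  exact hr (by simpa [coeff_monomial] using h e he)

end WithoutDegreeOne

theorem prime_X_zero_sub_X_succ {R : Type*} [CommRing R] [IsDomain R] {n : ℕ} (j : Fin n) :
    Prime (X 0 - X j.succ : MvPolynomial (Fin (n + 1)) R) := by
  have h : finSuccEquiv R n (X 0 - X j.succ) = Polynomial.X - Polynomial.C (X j) := by
    rw [map_sub, finSuccEquiv_X_zero, finSuccEquiv_X_succ]
  rw [← MulEquiv.prime_iff (finSuccEquiv R n).toMulEquiv]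
  exact h ▸ Polynomial.prime_X_sub_C _

variable {k σ : Type*} [Field k]

theorem exists_C_mul_eq_of_associated {p q : MvPolynomial σ k} (h : Associated p q) :
    ∃ c : k, c ≠ 0 ∧ q = C c * p := by
  obtain ⟨u, rfl⟩ := h
  obtain ⟨c, hc, hu⟩ := isUnit_iff_eq_C_of_isReduced.1 u.isUnit
  exact ⟨c, hc.ne_zero, by rw [hu, mul_comm]⟩

theorem mem_subalgebra_of_associated {S : Subalgebra k (MvPolynomial σ k)} {p q : MvPolynomial σ k}
    (h : Associated p q) (hq : q ∈ S) : p ∈ S := by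
  obtain ⟨c, -, rfl⟩ := exists_C_mul_eq_of_associated h.symm
  exact S.mul_mem (S.algebraMap_mem c) hq

end MvPolynomial

theorem Rc2_le_withoutDegreeOneIn (k : Type*) [Field k] : Rc2 k ≤ withoutDegreeOneIn 1 := by
  refine Algebra.adjoin_le ?_
  rintro _ (rfl | rfl | rfl | rfl) <;>
    (rw [X_pow_eq_monomial]; exact monomial_mem_withoutDegreeOneIn (by simp) _)

theorem sub_mul_X_pow_notMem_Rc2 (k : Type*) [Field k] (j : ℕ) :
    ((X 0 - X 1) * X 0 ^ j : MvPolynomial (Fin 2) k) ∉ Rc2 k := by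
  intro h
  have hX : (X 1 * X 0 ^ j : MvPolynomial (Fin 2) k) =
      monomial (Finsupp.single 1 1 + Finsupp.single 0 j) 1 := by
    rw [X_pow_eq_monomial, X, monomial_mul, one_mul]
  have hpow : (X 0 ^ (j + 1) : MvPolynomial (Fin 2) k) ∈ withoutDegreeOneIn 1 := by
    rw [X_pow_eq_monomial]
    exact monomial_mem_withoutDegreeOneIn (by simp) _
  have hmem : (X 1 * X 0 ^ j : MvPolynomial (Fin 2) k) ∈ withoutDegreeOneIn 1 := by
    rw [show (X 1 * X 0 ^ j : MvPolynomial (Fin 2) k) = X 0 ^ (j + 1) - (X 0 - X 1) * X 0 ^ j by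
      ring]
    exact sub_mem hpow (Rc2_le_withoutDegreeOneIn k h)
  rw [hX] at hmem
  exact monomial_notMem_withoutDegreeOneIn (by simp) one_ne_zero hmem

theorem stmt_15 (k : Type*) [Field k] :
    (∀ (N : ℕ) (d : MvPolynomial (Fin 2) k), d ∈ Rc2 k →
        d ∣ (X 0 - X 1) * X 0 ^ N →
        ∃ (c : k) (j : ℕ), c ≠ 0 ∧ d = C c * X 0 ^ j) ∧
    ∀ j : ℕ, ((X 0 - X 1) * X 0 ^ j : MvPolynomial (Fin 2) k) ∉ Rc2 k := by
  refine ⟨fun N d hd hdvd => ?_, sub_mul_X_pow_notMem_Rc2 k⟩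
  have hp : Prime (X 0 - X 1 : MvPolynomial (Fin 2) k) := prime_X_zero_sub_X_succ 0
  obtain ⟨a, ha, i, -, hassoc⟩ := associated_of_dvd_prime_mul_prime_pow hp X_prime hdvd
  obtain rfl | rfl := Nat.le_one_iff_eq_zero_or_eq_one.1 ha
  · obtain ⟨c, hc, rfl⟩ := exists_C_mul_eq_of_associated hassoc
    exact ⟨c, i, hc, by rw [pow_zero, one_mul]⟩
  · rw [pow_one] at hassoc
    exact absurd (mem_subalgebra_of_associated hassoc hd) (sub_mul_X_pow_notMem_Rc2 k i)
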